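/- Let H be a real Hilbert space and 0 ≤ r ≤ 1, x̂ ∈ H with ‖x̂‖ ≤ r. Define ξ((1,y)) = log((1 − ⟨x̂,y⟩ + √((1 − ⟨x̂,y⟩)² − (1 − ‖y‖²)(1 − r²)))/((1 + r)√(1 − ‖y‖²))) for ‖y‖ < 1. If r = ‖x̂‖ < 1, then ξ((1,y)) = d_h((1,x̂),(1,y)) − d_h((1,x̂),(1,0)) for all y in the open unit ball; i.e., ξ is not a horofunction but an internal point of the horofunction compactification. -/

import Mathlib

/- Both d_h((1,x),(1,y)) and d_h((1,x),(1,0)) = log ((1 + ‖x‖) / √(1 - ‖x‖²)) carry the factor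
√(1 - ‖x‖²) in the denominator of the log, so it cancels in their difference, which leaves ξ((1,y))
with r = ‖x‖. -/

open RealInnerProductSpace

noncomputable def dh {H : Type*} [NormedAddCommGroup H] [InnerProductSpace ℝ H]
    (x y : H) : ℝ :=
  Real.log ((1 - ⟪x, y⟫ + Real.sqrt ((1 - ⟪x, y⟫) ^ 2 - (1 - ‖x‖ ^ 2) * (1 - ‖y‖ ^ 2))) /
    (Real.sqrt (1 - ‖x‖ ^ 2) * Real.sqrt (1 - ‖y‖ ^ 2)))

theorem Real.log_div_mul_sub_log_div {A a b c : ℝ} (hA : A ≠ 0) (ha : a ≠ 0) (hb : b ≠ 0)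
    (hc : c ≠ 0) : Real.log (A / (a * b)) - Real.log (c / a) = Real.log (A / (c * b)) := by
  rw [← Real.log_div (by positivity) (by positivity)]
  congr 1
  field_simp

section Hilbert

variable {H : Type*} [NormedAddCommGroup H] [InnerProductSpace ℝ H]

theorem dh_zero_right (x : H) :
    dh x 0 = Real.log ((1 + ‖x‖) / Real.sqrt (1 - ‖x‖ ^ 2)) := by
  have hsq : ((1 : ℝ) - 0) ^ 2 - (1 - ‖x‖ ^ 2) * (1 - (0 : ℝ) ^ 2) = ‖x‖ ^ 2 := by ring
  simp only [dh, inner_zero_right, norm_zero, hsq, Real.sqrt_sq (norm_nonneg x)]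
  norm_num

theorem one_sub_inner_pos {x y : H} (hx : ‖x‖ < 1) (hy : ‖y‖ < 1) : 0 < 1 - ⟪x, y⟫ := by
  have hxy : ‖x‖ * ‖y‖ < 1 := by nlinarith [norm_nonneg x, norm_nonneg y]
  linarith [real_inner_le_norm x y]

end Hilbert

theorem stmt_19_general {H : Type*} [NormedAddCommGroup H] [InnerProductSpace ℝ H]
    (xhat : H) (r : ℝ) (hrx : r = ‖xhat‖) (hxhat : ‖xhat‖ < 1) :
    ∀ y : H, ‖y‖ < 1 →
      Real.log ((1 - ⟪xhat, y⟫ +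
          Real.sqrt ((1 - ⟪xhat, y⟫) ^ 2 - (1 - ‖y‖ ^ 2) * (1 - r ^ 2))) /
          ((1 + r) * Real.sqrt (1 - ‖y‖ ^ 2))) =
        dh xhat y - dh xhat (0 : H) := by
  intro y hy
  subst hrx
  have hA : 0 < 1 - ⟪xhat, y⟫ +
      Real.sqrt ((1 - ⟪xhat, y⟫) ^ 2 - (1 - ‖xhat‖ ^ 2) * (1 - ‖y‖ ^ 2)) :=
    add_pos_of_pos_of_nonneg (one_sub_inner_pos hxhat hy) (Real.sqrt_nonneg _)
  have hsx : Real.sqrt (1 - ‖xhat‖ ^ 2) ≠ 0 :=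
    (Real.sqrt_pos.mpr (by nlinarith [norm_nonneg xhat])).ne'
  have hsy : Real.sqrt (1 - ‖y‖ ^ 2) ≠ 0 :=
    (Real.sqrt_pos.mpr (by nlinarith [norm_nonneg y])).ne'
  rw [dh_zero_right, dh, Real.log_div_mul_sub_log_div hA.ne' hsx hsy
    (by positivity : (0 : ℝ) < 1 + ‖xhat‖).ne', mul_comm (1 - ‖y‖ ^ 2)]

theorem stmt_19 {H : Type*} [NormedAddCommGroup H] [InnerProductSpace ℝ H] [CompleteSpace H]
    (xhat : H) (r : ℝ) (hr0 : 0 ≤ r) (hr1 : r ≤ 1) (hrx : r = ‖xhat‖) (hxhat : ‖xhat‖ < 1) :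
    ∀ y : H, ‖y‖ < 1 →
      Real.log ((1 - ⟪xhat, y⟫ +
          Real.sqrt ((1 - ⟪xhat, y⟫) ^ 2 - (1 - ‖y‖ ^ 2) * (1 - r ^ 2))) /
          ((1 + r) * Real.sqrt (1 - ‖y‖ ^ 2))) =
        dh xhat y - dh xhat (0 : H) :=
  stmt_19_general xhat r hrx hxhat
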